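/- arXiv:2101.12401 — 3 statements merged into one kernel-verified Lean document; each statement's English description precedes it below -/
import Mathlib

section
/- Spearman's rho of the bound copula with parameter θ ∈ [-1,1] equals θ(θ²+1)/2, i.e., 12·∫₀¹∫₀¹ [(1-θ²)uv + (θ/4)((1+θ)² min(u,v) - (1-θ)² max(u+v-1,0))] du dv - 3 = θ(θ²+1)/2. -/
/-!
The bound copula is the affine combination
`(1 - θ²) Π + θ(1 + θ)²/4 · M - θ(1 - θ)²/4 · W` of the independence copula `Π` and the
Fréchet–Hoeffding bounds `M`, `W`, whose weights sum to `1`. Spearman's rho is affine on such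
combinations, and `ρ(Π) = 0`, `ρ(M) = 1`, `ρ(W) = -1`, so `ρ = θ((1 + θ)² + (1 - θ)²)/4`.
-/

/-- The bound copula. -/
noncomputable def boundCopula (θ u v : ℝ) : ℝ :=
  (1 - θ^2) * u * v +
    (θ / 4) * ((1 + θ)^2 * min u v - (1 - θ)^2 * max (u + v - 1) 0)

open intervalIntegral Set

noncomputable def spearmanRho (C : ℝ → ℝ → ℝ) : ℝ :=
  12 * (∫ u in (0:ℝ)..1, ∫ v in (0:ℝ)..1, C u v) - 3

def independenceCopula (u v : ℝ) : ℝ := u * v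

def upperFrechetBound (u v : ℝ) : ℝ := min u v

def lowerFrechetBound (u v : ℝ) : ℝ := max (u + v - 1) 0

theorem continuous_independenceCopula : Continuous independenceCopula.uncurry := by
  unfold independenceCopula; fun_prop

theorem continuous_upperFrechetBound : Continuous upperFrechetBound.uncurry := by
  unfold upperFrechetBound; fun_prop

theorem continuous_lowerFrechetBound : Continuous lowerFrechetBound.uncurry := by
  unfold lowerFrechetBound; fun_prop

theorem spearmanRho_sum {ι : Type*} [Fintype ι] (w : ι → ℝ) (C : ι → ℝ → ℝ → ℝ)
    (hw : ∑ i, w i = 1) (hC : ∀ i, Continuous (C i).uncurry) :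
    spearmanRho (fun u v ↦ ∑ i, w i * C i u v) = ∑ i, w i * spearmanRho (C i) := by
  have inner_sum (u : ℝ) : ∫ v in (0:ℝ)..1, ∑ i, w i * C i u v
      = ∑ i, w i * ∫ v in (0:ℝ)..1, C i u v := by
    rw [integral_finsetSum (f := fun i v ↦ w i * C i u v) fun i _ ↦
      ((continuous_const.mul ((hC i).uncurry_left u)).intervalIntegrable _ _)]
    simp only [integral_const_mul]
  have outer_sum : ∫ u in (0:ℝ)..1, ∑ i, w i * ∫ v in (0:ℝ)..1, C i u v
      = ∑ i, w i * ∫ u in (0:ℝ)..1, ∫ v in (0:ℝ)..1, C i u v := by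
    rw [integral_finsetSum (f := fun i u ↦ w i * ∫ v in (0:ℝ)..1, C i u v) fun i _ ↦
      (continuous_const.mul (continuous_parametric_intervalIntegral_of_continuous' (hC i) 0 1)
        ).intervalIntegrable _ _]
    simp only [integral_const_mul]
  simp only [spearmanRho, inner_sum, outer_sum, mul_sub, Finset.sum_sub_distrib, ← Finset.sum_mul,
    hw, Finset.mul_sum]
  congr 1
  · exact Finset.sum_congr rfl fun i _ ↦ by ring
  · ring

theorem integral_min_of_mem_Icc {u : ℝ} (hu : u ∈ Icc (0:ℝ) 1) :
    ∫ v in (0:ℝ)..1, min u v = u - u ^ 2 / 2 := by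
  have hc : Continuous fun v : ℝ ↦ min u v := by fun_prop
  rw [← integral_add_adjacent_intervals (hc.intervalIntegrable 0 u) (hc.intervalIntegrable u 1),
    integral_congr (g := fun v ↦ v) fun v hv ↦ min_eq_right (uIcc_of_le hu.1 ▸ hv).2,
    integral_congr (g := fun _ ↦ u) fun v hv ↦ min_eq_left (uIcc_of_le hu.2 ▸ hv).1]
  simp only [integral_id, integral_const, smul_eq_mul]
  ring

theorem lowerFrechetBound_eq_sub_upperFrechetBound (u v : ℝ) :
    lowerFrechetBound u v = u - upperFrechetBound u (1 - v) := by
  rcases le_total u (1 - v) with h | h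
  · rw [upperFrechetBound, min_eq_left h, lowerFrechetBound, max_eq_right (by linarith)]; ring
  · rw [upperFrechetBound, min_eq_right h, lowerFrechetBound, max_eq_left (by linarith)]; ring

theorem integral_lowerFrechetBound_of_mem_Icc {u : ℝ} (hu : u ∈ Icc (0:ℝ) 1) :
    ∫ v in (0:ℝ)..1, lowerFrechetBound u v = u ^ 2 / 2 := by
  have reflect := integral_comp_sub_left (a := 0) (b := 1) (fun v ↦ u - min u v) 1
  norm_num at reflect
  simp only [lowerFrechetBound_eq_sub_upperFrechetBound, upperFrechetBound, reflect]
  rw [integral_sub intervalIntegrable_const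
    ((by fun_prop : Continuous fun v : ℝ ↦ min u v).intervalIntegrable _ _),
    integral_min_of_mem_Icc hu]
  simp

theorem spearmanRho_independenceCopula : spearmanRho independenceCopula = 0 := by
  have inner_eq (u : ℝ) : ∫ v in (0:ℝ)..1, u * v = u / 2 := by
    rw [integral_const_mul, integral_id]
    ring
  simp only [spearmanRho, independenceCopula, inner_eq, integral_div, integral_id]
  norm_num

theorem spearmanRho_upperFrechetBound : spearmanRho upperFrechetBound = 1 := by
  unfold spearmanRho upperFrechetBound
  rw [integral_congr fun u hu ↦ integral_min_of_mem_Icc (uIcc_of_le (zero_le_one' ℝ) ▸ hu)]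
  norm_num [integral_id]

theorem spearmanRho_lowerFrechetBound : spearmanRho lowerFrechetBound = -1 := by
  rw [spearmanRho, integral_congr fun u hu ↦
    integral_lowerFrechetBound_of_mem_Icc (uIcc_of_le (zero_le_one' ℝ) ▸ hu)]
  norm_num

theorem boundCopula_eq_sum (θ u v : ℝ) :
    boundCopula θ u v = ∑ i : Fin 3,
      ![1 - θ ^ 2, θ * (1 + θ) ^ 2 / 4, -(θ * (1 - θ) ^ 2 / 4)] i *
        ![independenceCopula, upperFrechetBound, lowerFrechetBound] i u v := by
  simp only [boundCopula, independenceCopula, upperFrechetBound, lowerFrechetBound,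
    Fin.sum_univ_three, Matrix.cons_val]
  ring

theorem boundCopula_spearman_rho_general (θ : ℝ) :
    12 * (∫ u in (0:ℝ)..1, ∫ v in (0:ℝ)..1, boundCopula θ u v) - 3
      = θ * (θ^2 + 1) / 2 := by
  change spearmanRho (boundCopula θ) = _
  simp only [funext₂ (boundCopula_eq_sum θ)]
  rw [spearmanRho_sum _ _ (by simp only [Fin.sum_univ_three, Matrix.cons_val]; ring) fun i ↦ by
    fin_cases i
    exacts [continuous_independenceCopula, continuous_upperFrechetBound,
      continuous_lowerFrechetBound]]
  simp only [Fin.sum_univ_three, Matrix.cons_val,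
    spearmanRho_independenceCopula, spearmanRho_upperFrechetBound, spearmanRho_lowerFrechetBound]
  ring

theorem boundCopula_spearman_rho (θ : ℝ) (hθ : θ ∈ Set.Icc (-1:ℝ) 1) :
    12 * (∫ u in (0:ℝ)..1, ∫ v in (0:ℝ)..1, boundCopula θ u v) - 3
      = θ * (θ^2 + 1) / 2 :=
  boundCopula_spearman_rho_general θ
end

section
/- Gini's gamma of the bound copula with parameter θ ∈ [-1,1] equals θ(θ²+1)/2, i.e., 4·∫₀¹ [C(u,u) + C(u,1-u) - u] du = θ(θ²+1)/2 where C(u,v) = (1-θ²)uv + (θ/4)[(1+θ)² min(u,v) - (1-θ)² max(u+v-1,0)]. -/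
open intervalIntegral Function

noncomputable def giniGamma (C : ℝ → ℝ → ℝ) : ℝ :=
  4 * ∫ u in (0:ℝ)..1, (C u u + C u (1 - u) - u)

lemma intervalIntegrable_giniGamma_integrand {C : ℝ → ℝ → ℝ} (hC : Continuous (uncurry C))
    (a b : ℝ) :
    IntervalIntegrable (fun u => C u u + C u (1 - u) - u) MeasureTheory.volume a b := by
  have hdiag : Continuous fun u => C u u := hC.comp (continuous_id.prodMk continuous_id)
  have hanti : Continuous fun u => C u (1 - u) :=
    hC.comp (continuous_id.prodMk (continuous_const.sub continuous_id))
  exact ((hdiag.add hanti).sub continuous_id).intervalIntegrable a b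

lemma giniGamma_affineCombination {A B C : ℝ → ℝ → ℝ} (hA : Continuous (uncurry A))
    (hB : Continuous (uncurry B)) (hC : Continuous (uncurry C)) {a b c : ℝ}
    (habc : a + b + c = 1) :
    giniGamma (fun u v => a * A u v + b * B u v + c * C u v)
      = a * giniGamma A + b * giniGamma B + c * giniGamma C := by
  have hsplit : ∀ u : ℝ,
      (a * A u u + b * B u u + c * C u u)
          + (a * A u (1 - u) + b * B u (1 - u) + c * C u (1 - u)) - u
        = a * (A u u + A u (1 - u) - u) + b * (B u u + B u (1 - u) - u)
          + c * (C u u + C u (1 - u) - u) := fun u => by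
    linear_combination u * habc
  have iA := (intervalIntegrable_giniGamma_integrand hA 0 1).const_mul a
  have iB := (intervalIntegrable_giniGamma_integrand hB 0 1).const_mul b
  have iC := (intervalIntegrable_giniGamma_integrand hC 0 1).const_mul c
  simp only [giniGamma, hsplit]
  rw [integral_add (iA.add iB) iC, integral_add iA iB, integral_const_mul, integral_const_mul,
    integral_const_mul]
  ring

lemma integral_min_one_sub : ∫ u in (0:ℝ)..1, min u (1 - u) = 1 / 4 := by
  have hcont : Continuous fun u : ℝ => min u (1 - u) := by fun_prop
  have hleft : ∫ u in (0:ℝ)..1 / 2, min u (1 - u) = ∫ u in (0:ℝ)..1 / 2, u := by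
    refine integral_congr fun u hu => ?_
    rw [Set.uIcc_of_le (by norm_num)] at hu
    exact min_eq_left (by linarith [hu.2])
  have hright : ∫ u in (1 / 2 : ℝ)..1, min u (1 - u) = ∫ u in (1 / 2 : ℝ)..1, (1 - u) := by
    refine integral_congr fun u hu => ?_
    rw [Set.uIcc_of_le (by norm_num)] at hu
    exact min_eq_right (by linarith [hu.1])
  rw [← integral_add_adjacent_intervals (hcont.intervalIntegrable 0 (1 / 2))
      (hcont.intervalIntegrable (1 / 2) 1), hleft, hright,
    integral_comp_sub_left (fun u => u), integral_id, integral_id]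
  norm_num

lemma giniGamma_mul : giniGamma (fun u v => u * v) = 0 := by
  simp [giniGamma, mul_sub]

lemma giniGamma_min : giniGamma min = 1 := by
  simp only [giniGamma, min_self, add_sub_cancel_left, integral_min_one_sub]
  norm_num

lemma giniGamma_lowerFrechetBound : giniGamma (fun u v => max (u + v - 1) 0) = -1 := by
  have hintegrand : ∀ u : ℝ, max (u + u - 1) 0 + max (u + (1 - u) - 1) 0 - u = -min u (1 - u) :=
    fun u => by
      rw [show u + (1 - u) - 1 = 0 by ring, max_self]
      rcases le_total u (1 - u) with hu | hu
      · rw [min_eq_left hu, max_eq_right (by linarith)]; ring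
      · rw [min_eq_right hu, max_eq_left (by linarith)]; ring
  simp only [giniGamma, hintegrand, integral_neg, integral_min_one_sub]
  norm_num

lemma boundCopula_eq_affineCombination (θ : ℝ) :
    boundCopula θ = fun u v => (1 - θ ^ 2) * (u * v) + (θ / 4 * (1 + θ) ^ 2) * min u v
      + (-(θ / 4 * (1 - θ) ^ 2)) * max (u + v - 1) 0 := by
  ext u v
  unfold boundCopula
  ring

theorem boundCopula_gini_gamma_general (θ : ℝ) :
    4 * (∫ u in (0:ℝ)..1, (boundCopula θ u u + boundCopula θ u (1 - u) - u))
      = θ * (θ^2 + 1) / 2 := by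
  change giniGamma (boundCopula θ) = _
  rw [boundCopula_eq_affineCombination,
    giniGamma_affineCombination (by fun_prop) (by fun_prop) (by fun_prop) (by ring),
    giniGamma_mul, giniGamma_min, giniGamma_lowerFrechetBound]
  ring

theorem boundCopula_gini_gamma (θ : ℝ) (hθ : θ ∈ Set.Icc (-1:ℝ) 1) :
    4 * (∫ u in (0:ℝ)..1, (boundCopula θ u u + boundCopula θ u (1 - u) - u))
      = θ * (θ^2 + 1) / 2 :=
  boundCopula_gini_gamma_general θ
end

section
/- The coefficient of upper tail dependence of the bound copula equals θ(1+θ)²/4: the limit as u → 1⁻ of (1 - 2u + C(u,u))/(1-u) equals θ(1+θ)²/4, where C(u,v) = (1-θ²)uv + (θ/4)[(1+θ)² min(u,v) - (1-θ)² max(u+v-1,0)] and θ ∈ [-1,1]. -/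
theorem boundCopula_upper_tail_dependence (θ : ℝ) (hθ : θ ∈ Set.Icc (-1:ℝ) 1) :
    Filter.Tendsto (fun u : ℝ => (1 - 2 * u + boundCopula θ u u) / (1 - u))
      (nhdsWithin 1 (Set.Iio 1)) (nhds (θ * (1 + θ)^2 / 4)) := by
  have key : Filter.Tendsto
      (fun u : ℝ => -((1 - θ^2) * (u + 1) - 2 + (θ/4) * ((1+θ)^2 - 2*(1-θ)^2)))
      (nhdsWithin 1 (Set.Iio 1)) (nhds (θ * (1 + θ)^2 / 4)) := by
    have : Continuous (fun u : ℝ =>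
        -((1 - θ^2) * (u + 1) - 2 + (θ/4) * ((1+θ)^2 - 2*(1-θ)^2))) := by continuity
    have h := (this.tendsto 1).mono_left (nhdsWithin_le_nhds (s := Set.Iio 1))
    convert h using 2
    ring
  refine key.congr' ?_
  filter_upwards [Filter.inter_mem (self_mem_nhdsWithin)
    (nhdsWithin_le_nhds (Ioo_mem_nhds (by norm_num : (1:ℝ)/2 < 1) (by norm_num : (1:ℝ) < 2)))]
    with u hu
  obtain ⟨hu1, hu2, hu3⟩ := hu
  have hlt : u < 1 := hu1
  have hne : 1 - u ≠ 0 := by linarith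
  have hmin : min u u = u := min_self u
  have hmax : max (u + u - 1) 0 = u + u - 1 := max_eq_left (by linarith)
  simp only [boundCopula, hmin, hmax]
  field_simp
  ring
end
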